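/- For any tree T with n ≥ 5 pendent vertices, Π_2(T) = Π_{v∈V(T)} d_T(v)^{d_T(v)} ≥ exp((5 ln 5 / 3)·(n-2)), with equality at any tree whose internal vertices all have degree 5 (which exists when (n-2)/3 is an integer). -/

import Mathlib

/-!
Put `c = 5 ln 5 / 3`. For every natural number `d`,
`d ln d ≥ c (d - 2) + c [d = 1]`, with equality at `d = 1` and `d = 5`; for `d ≥ 2` this is
`5 ^ (5 (d - 2)) ≤ d ^ (3 d)`. In a tree `∑ᵥ (d(v) - 2) = -2`, so summing over the vertices of a
tree with `n` leaves gives `ln Π₂(T) ≥ c (n - 2)`, with equality when every internal vertex has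
degree `5`.
-/

open scoped Classical

open Finset Real

lemma five_pow_five_mul_sub_two_le_pow_three_mul {d : ℕ} (hd : 2 ≤ d) :
    5 ^ (5 * (d - 2)) ≤ d ^ (3 * d) := by
  rcases le_or_gt d 14 with h | h
  · interval_cases d <;> norm_num
  · calc 5 ^ (5 * (d - 2)) ≤ (5 ^ 5) ^ d := by
          rw [← pow_mul]; exact Nat.pow_le_pow_right (by norm_num) (by omega)
      _ ≤ (15 ^ 3) ^ d := Nat.pow_le_pow_left (by norm_num) d
      _ ≤ d ^ (3 * d) := by rw [← pow_mul]; exact Nat.pow_le_pow_left h _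

lemma le_mul_log_self (d : ℕ) :
    5 * log 5 / 3 * ((d : ℝ) - 2 + if d = 1 then 1 else 0) ≤ d * log d := by
  rcases lt_trichotomy d 1 with h0 | rfl | h2
  · obtain rfl := Nat.lt_one_iff.1 h0
    have : 0 ≤ log 5 := log_nonneg (by norm_num)
    norm_num
    linarith
  · norm_num
  · have hd : 2 ≤ d := h2
    have hpow : ((5 : ℕ) : ℝ) ^ (5 * (d - 2)) ≤ (d : ℝ) ^ (3 * d) := by
      exact_mod_cast five_pow_five_mul_sub_two_le_pow_three_mul hd
    have hlog := log_le_log (by positivity) hpow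
    rw [log_pow, log_pow] at hlog
    push_cast [Nat.cast_sub hd] at hlog
    rw [if_neg h2.ne']
    linarith

lemma eq_mul_log_self_of_eq_one_or_eq_five {d : ℕ} (hd : d = 1 ∨ d = 5) :
    5 * log 5 / 3 * ((d : ℝ) - 2 + if d = 1 then 1 else 0) = d * log d := by
  rcases hd with rfl | rfl <;> norm_num

lemma natCast_pow_self_eq_exp (d : ℕ) : (d : ℝ) ^ d = exp (d * log d) := by
  rcases Nat.eq_zero_or_pos d with rfl | hd
  · simp
  · rw [exp_nat_mul, exp_log (by exact_mod_cast hd)]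

namespace SimpleGraph

section Tree

variable {V : Type*} [Fintype V] {G : SimpleGraph V} [DecidableRel G.Adj]

lemma IsTree.sum_degree_sub_two (hG : G.IsTree) : ∑ v, ((G.degree v : ℝ) - 2) = -2 := by
  have hsum := congrArg (Nat.cast : ℕ → ℝ) G.sum_degrees_eq_twice_card_edges
  have hcard := congrArg (Nat.cast : ℕ → ℝ) hG.card_edgeFinset
  push_cast at hsum hcard
  rw [sum_sub_distrib, hsum, sum_const, card_univ, nsmul_eq_mul, ← hcard]
  ring

lemma IsTree.card_leaves_sub_two (hG : G.IsTree) :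
    (#{v | G.degree v = 1} : ℝ) - 2 =
      ∑ v, ((G.degree v : ℝ) - 2 + if G.degree v = 1 then 1 else 0) := by
  rw [sum_add_distrib, hG.sum_degree_sub_two, sum_boole]
  ring

lemma IsTree.exp_le_prod_pow_degree (hG : G.IsTree) :
    exp (5 * log 5 / 3 * ((#{v | G.degree v = 1} : ℝ) - 2)) ≤
      ∏ v, (G.degree v : ℝ) ^ G.degree v := by
  simp_rw [natCast_pow_self_eq_exp, ← exp_sum, hG.card_leaves_sub_two, mul_sum]
  exact exp_le_exp.2 (sum_le_sum fun v _ => le_mul_log_self _)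

lemma IsTree.prod_pow_degree_eq (hG : G.IsTree) (h : ∀ v, G.degree v ≠ 1 → G.degree v = 5) :
    ∏ v, (G.degree v : ℝ) ^ G.degree v =
      exp (5 * log 5 / 3 * ((#{v | G.degree v = 1} : ℝ) - 2)) := by
  simp_rw [natCast_pow_self_eq_exp, ← exp_sum, hG.card_leaves_sub_two, mul_sum]
  exact congrArg exp <| sum_congr rfl fun v _ =>
    (eq_mul_log_self_of_eq_one_or_eq_five (or_iff_not_imp_left.2 (h v))).symm

end Tree

section ParentGraph

def parentGraph (m : ℕ) (p : ℕ → ℕ) : SimpleGraph (Fin m) :=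
  fromRel fun i j => (i : ℕ) ≠ 0 ∧ p i = j

variable {m : ℕ} {p : ℕ → ℕ}

lemma parentGraph_adj {i j : Fin m} :
    (parentGraph m p).Adj i j ↔ i ≠ j ∧ ((i : ℕ) ≠ 0 ∧ p i = j ∨ (j : ℕ) ≠ 0 ∧ p j = i) :=
  fromRel_adj ..

lemma parentGraph_connected (hm : 0 < m) (hp : ∀ i, i ≠ 0 → p i < i) :
    (parentGraph m p).Connected := by
  have reach_root (v : Fin m) : (parentGraph m p).Reachable v ⟨0, hm⟩ := by
    induction v using WellFoundedLT.induction with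
    | _ v ih =>
      by_cases hv : (v : ℕ) = 0
      · rw [show v = ⟨0, hm⟩ from Fin.ext hv]
      · have hpv := hp v hv
        have hadj : (parentGraph m p).Adj v ⟨p v, hpv.trans v.2⟩ :=
          parentGraph_adj.2 ⟨Fin.ne_of_gt hpv, Or.inl ⟨hv, rfl⟩⟩
        exact hadj.reachable.trans (ih _ hpv)
  have : Nonempty (Fin m) := ⟨⟨0, hm⟩⟩
  exact (connected_iff_exists_forall_reachable _).2 ⟨⟨0, hm⟩, fun v => (reach_root v).symm⟩

lemma card_edgeSet_parentGraph (hp : ∀ i, i ≠ 0 → p i < i) :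
    Nat.card (parentGraph m p).edgeSet = Nat.card {v : Fin m // (v : ℕ) ≠ 0} := by
  symm
  refine Nat.card_eq_of_bijective
    (fun v => ⟨s(v.1, ⟨p v.1, (hp _ v.2).trans v.1.2⟩),
      parentGraph_adj.2 ⟨Fin.ne_of_gt (hp _ v.2), Or.inl ⟨v.2, rfl⟩⟩⟩) ⟨?_, ?_⟩
  · rintro ⟨v, hv⟩ ⟨w, hw⟩ h
    have := hp _ hv
    have := hp _ hw
    have h' := congrArg Subtype.val h
    simp only [Sym2.eq_iff, Fin.ext_iff] at h'
    exact Subtype.ext (Fin.ext (show (v : ℕ) = w by omega))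
  · rintro ⟨e, he⟩
    induction e using Sym2.ind with
    | _ i j =>
      rcases parentGraph_adj.1 he with ⟨-, ⟨hi, hij⟩ | ⟨hj, hji⟩⟩
      · exact ⟨⟨i, hi⟩, by ext; simp [Fin.ext_iff, hij]⟩
      · exact ⟨⟨j, hj⟩, by ext; simp [Fin.ext_iff, hji, or_comm]⟩

lemma isTree_parentGraph (hm : 0 < m) (hp : ∀ i, i ≠ 0 → p i < i) :
    (parentGraph m p).IsTree := by
  refine isTree_iff_connected_and_card.2 ⟨parentGraph_connected hm hp, ?_⟩
  obtain ⟨m, rfl⟩ := Nat.exists_eq_add_of_lt hm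
  rw [card_edgeSet_parentGraph hp]
  simp [Nat.card_eq_fintype_card, Fintype.card_subtype, filter_ne']

lemma degree_parentGraph (v : Fin m) :
    (parentGraph m p).degree v =
      #{i ∈ Iio m | i ≠ (v : ℕ) ∧ ((v : ℕ) ≠ 0 ∧ p v = i ∨ i ≠ 0 ∧ p i = v)} := by
  rw [← card_neighborFinset_eq_degree, ← card_map Fin.valEmbedding, neighborFinset_eq_filter,
    ← Fin.map_valEmbedding_univ, filter_map]
  congr 1
  ext i
  simp [parentGraph_adj, Fin.ext_iff, eq_comm]

end ParentGraph

section DegreeFiveTree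

/-- The root `0` has children `1, …, 5` and every other vertex `j` has children
`4j + 2, …, 4j + 5`, so the vertices below `k` have degree `5` and the others are leaves. -/
def degreeFiveTree (k : ℕ) : SimpleGraph (Fin (4 * k + 2)) :=
  parentGraph (4 * k + 2) fun i => (i - 2) / 4

variable {k : ℕ}

lemma isTree_degreeFiveTree : (degreeFiveTree k).IsTree :=
  isTree_parentGraph (by omega) fun i hi => by omega

lemma degree_degreeFiveTree (hk : 0 < k) (v : Fin (4 * k + 2)) :
    (degreeFiveTree k).degree v = if (v : ℕ) < k then 5 else 1 := by
  have hv := v.2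
  rw [degreeFiveTree, degree_parentGraph]
  split_ifs with hvk
  · by_cases hv0 : (v : ℕ) = 0
    · convert Nat.card_Icc 1 5 using 2
      ext i; simp only [mem_filter, mem_Iio, mem_Icc]; omega
    · convert card_insert_of_notMem (s := Icc (4 * (v : ℕ) + 2) (4 * v + 5)) (a := (v - 2) / 4)
        (by simp only [mem_Icc]; omega) using 2
      · ext i; simp only [mem_filter, mem_Iio, mem_Icc, mem_insert]; omega
      · simp
  · convert card_singleton (((v : ℕ) - 2) / 4) using 2
    ext i; simp only [mem_filter, mem_Iio, mem_singleton]; omega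

lemma degree_degreeFiveTree_eq_five_of_ne_one (hk : 0 < k) {v : Fin (4 * k + 2)}
    (hv : (degreeFiveTree k).degree v ≠ 1) : (degreeFiveTree k).degree v = 5 := by
  rw [degree_degreeFiveTree hk] at hv ⊢
  split_ifs at hv ⊢ <;> simp_all

lemma card_leaves_degreeFiveTree (hk : 0 < k) :
    #{v | (degreeFiveTree k).degree v = 1} = 3 * k + 2 := by
  have hsplit :=
    card_filter_add_card_filter_not (s := univ) fun v : Fin (4 * k + 2) => (v : ℕ) < k
  simp only [Fin.card_filter_val_lt, card_univ, Fintype.card_fin, not_lt] at hsplit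
  simp only [degree_degreeFiveTree hk, apply_ite (· = 1), OfNat.ofNat_ne_one, if_false_left, not_lt,
    and_true]
  omega

end DegreeFiveTree

end SimpleGraph

/-- For any tree `T` with `n ≥ 5` pendent vertices,
`Π₂(T) = Π_v d(v)^{d(v)} ≥ exp((5 ln 5 / 3)·(n-2))`, with equality at any tree whose
internal vertices all have degree 5; such a tree exists when `(n-2)/3` is an integer. -/
theorem stmt_12 (n : ℕ) (hn : 5 ≤ n) :
    (∀ (V : Type) [Fintype V] (G : SimpleGraph V) [DecidableRel G.Adj],
      G.IsTree → (Finset.univ.filter fun v => G.degree v = 1).card = n →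
      (Real.exp ((5 * Real.log 5 / 3) * ((n : ℝ) - 2)) ≤
        ∏ v : V, (G.degree v : ℝ) ^ (G.degree v)) ∧
      ((∀ v : V, G.degree v ≠ 1 → G.degree v = 5) →
        ∏ v : V, (G.degree v : ℝ) ^ (G.degree v) =
          Real.exp ((5 * Real.log 5 / 3) * ((n : ℝ) - 2)))) ∧
    (3 ∣ (n - 2) →
      ∃ (m : ℕ) (G : SimpleGraph (Fin m)),
        G.IsTree ∧ (Finset.univ.filter fun v => G.degree v = 1).card = n ∧
        (∀ v, G.degree v ≠ 1 → G.degree v = 5)) := by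
  refine ⟨fun V _ G _ hG hleaves => ?_, fun ⟨k, hk⟩ => ?_⟩
  · subst hleaves
    exact ⟨hG.exp_le_prod_pow_degree, hG.prod_pow_degree_eq⟩
  · have hk0 : 0 < k := by omega
    refine ⟨4 * k + 2, SimpleGraph.degreeFiveTree k, SimpleGraph.isTree_degreeFiveTree, ?_,
      fun v => SimpleGraph.degree_degreeFiveTree_eq_five_of_ne_one hk0⟩
    rw [SimpleGraph.card_leaves_degreeFiveTree hk0]
    omega
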